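/- For every odd prime p ≥ 3, the graph ER'(p) (real-orthogonality graph on the standard representatives of the projective plane over F_p) contains a subgraph isomorphic to G_13, and hence χ(ER'(p)) ≥ 4. -/

import Mathlib

/-- The standard representatives of the one-dimensional subspaces of `F_p³`. -/
def projReps (p : ℕ) [Fact p.Prime] : Finset (Fin 3 → ZMod p) :=
  {![0, 0, 1]} ∪
    (Finset.univ.image fun a : ZMod p => ![0, 1, a]) ∪
    (Finset.univ.image fun ab : ZMod p × ZMod p => ![1, ab.1, ab.2])

/-- The integer representatives with entries in `{0, ±1, …, ±(p-1)/2}`. -/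
def ERVerts (p : ℕ) [Fact p.Prime] : Finset (Fin 3 → ℤ) :=
  (projReps p).image fun v => fun i => (v i).valMinAbs

/-- The graph `ER'(p)`: adjacency is orthogonality over ℝ (equivalently ℤ). -/
def ERGraph (p : ℕ) [Fact p.Prime] : SimpleGraph (ERVerts p) :=
  SimpleGraph.fromRel (fun u v => dotProduct (u : Fin 3 → ℤ) (v : Fin 3 → ℤ) = 0)

/-- The 13 vectors in ℝ³ defining the graph `G₁₃`. -/
def g13Vecs : Fin 13 → (Fin 3 → ℝ) :=
  ![![1,0,0], ![0,1,0], ![0,0,1], ![1,1,0], ![1,-1,0], ![1,0,1], ![1,0,-1],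
    ![0,1,1], ![0,1,-1], ![1,1,1], ![1,1,-1], ![1,-1,1], ![-1,1,1]]

/-- The orthogonality graph `G₁₃`. -/
def G13 : SimpleGraph (Fin 13) :=
  SimpleGraph.fromRel (fun i j => dotProduct (g13Vecs i) (g13Vecs j) = 0)

/-!
Each of the 13 vectors is a multiple of a `{0, ±1}`-vector with first nonzero entry `1`; for
`p ≥ 3` reduction mod `p` followed by `valMinAbs` returns it unchanged, so it is a vertex of
`ER'(p)`, and orthogonality is the same integer condition in both graphs. `G₁₃` is not
3-colourable: the basis triangle receives three colours, the three triangles through a basis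
vector force the colours of the vectors `(1, ±1, 0)`, `(1, 0, ±1)`, `(0, 1, ±1)`, and one of the
four vectors `(±1, ±1, ±1)` is then adjacent to all three colours.
-/

lemma Fin.three_pigeonhole {a b c x : Fin 3} (hab : a ≠ b) (hac : a ≠ c) (hbc : b ≠ c)
    (hxa : x ≠ a) (hxb : x ≠ b) (hxc : x ≠ c) : False := by
  revert a b c x; decide

lemma Fin.eq_and_eq_or_eq_and_eq_of_ne {a b c x y : Fin 3} (hab : a ≠ b) (hac : a ≠ c)
    (hbc : b ≠ c) (hxc : x ≠ c) (hyc : y ≠ c) (hxy : x ≠ y) :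
    (x = a ∧ y = b) ∨ (x = b ∧ y = a) := by
  revert a b c x y; decide

lemma ZMod.valMinAbs_intCast_of_two_mul_abs_lt {n : ℕ} {x : ℤ} (h : 2 * |x| < n) :
    (x : ZMod n).valMinAbs = x := by
  have : NeZero n := ⟨by rintro rfl; simp only [Nat.cast_zero] at h; linarith [abs_nonneg x]⟩
  rw [ZMod.valMinAbs_spec]
  refine ⟨rfl, ?_, ?_⟩ <;> linarith [le_abs_self x, neg_abs_le x]

/-- The first nonzero entry of `v` is `1`. -/
def LeadingOne {R : Type*} [Zero R] [One R] (v : Fin 3 → R) : Prop :=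
  v 0 = 1 ∨ v 0 = 0 ∧ (v 1 = 1 ∨ v 1 = 0 ∧ v 2 = 1)

lemma LeadingOne.map {R S F : Type*} [Zero R] [One R] [Zero S] [One S] [FunLike F R S]
    [ZeroHomClass F R S] [OneHomClass F R S] (f : F) {v : Fin 3 → R} (hv : LeadingOne v) :
    LeadingOne (f ∘ v) := by
  simp only [LeadingOne, Function.comp_apply]
  rcases hv with h0 | ⟨h0, h1 | ⟨h1, h2⟩⟩
  · exact Or.inl (by rw [h0, map_one])
  · exact Or.inr ⟨by rw [h0, map_zero], Or.inl (by rw [h1, map_one])⟩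
  · exact Or.inr ⟨by rw [h0, map_zero], Or.inr ⟨by rw [h1, map_zero], by rw [h2, map_one]⟩⟩

lemma mem_projReps_of_leadingOne (p : ℕ) [Fact p.Prime] {v : Fin 3 → ZMod p}
    (hv : LeadingOne v) : v ∈ projReps p := by
  simp only [projReps, Finset.mem_union, Finset.mem_singleton, Finset.mem_image,
    Finset.mem_univ, true_and, Prod.exists]
  rcases hv with h0 | ⟨h0, h1 | ⟨h1, h2⟩⟩
  · exact Or.inr ⟨v 1, v 2, by ext i; fin_cases i <;> simp [h0]⟩
  · exact Or.inl (Or.inr ⟨v 2, by ext i; fin_cases i <;> simp [h0, h1]⟩)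
  · exact Or.inl (Or.inl (by ext i; fin_cases i <;> simp [h0, h1, h2]))

lemma mem_ERVerts_of_leadingOne (p : ℕ) [Fact p.Prime] {v : Fin 3 → ℤ} (hv : LeadingOne v)
    (hsmall : ∀ i, 2 * |v i| < p) : v ∈ ERVerts p :=
  Finset.mem_image.2 ⟨_, mem_projReps_of_leadingOne p (hv.map (Int.castRingHom (ZMod p))),
    funext fun i => ZMod.valMinAbs_intCast_of_two_mul_abs_lt (hsmall i)⟩

lemma ERGraph_adj_iff {p : ℕ} [Fact p.Prime] {u v : ERVerts p} :
    (ERGraph p).Adj u v ↔ u ≠ v ∧ (u : Fin 3 → ℤ) ⬝ᵥ v = 0 := by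
  rw [ERGraph, SimpleGraph.fromRel_adj, dotProduct_comm (v : Fin 3 → ℤ), or_self]

/-- The vertices of `ER'(p)` spanning the lines of `g13Vecs`: the last vector `(-1, 1, 1)` is
replaced by `(1, -1, -1)`. -/
def g13Rep : Fin 13 → Fin 3 → ℤ :=
  ![![1,0,0], ![0,1,0], ![0,0,1], ![1,1,0], ![1,-1,0], ![1,0,1], ![1,0,-1],
    ![0,1,1], ![0,1,-1], ![1,1,1], ![1,1,-1], ![1,-1,1], ![1,-1,-1]]

lemma g13Vecs_dotProduct_eq_zero_iff (i j : Fin 13) :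
    g13Vecs i ⬝ᵥ g13Vecs j = 0 ↔ g13Rep i ⬝ᵥ g13Rep j = 0 := by
  fin_cases i <;> fin_cases j <;> simp [g13Vecs, g13Rep, dotProduct, Fin.sum_univ_three] <;>
    norm_num

lemma G13_adj_iff {i j : Fin 13} : G13.Adj i j ↔ i ≠ j ∧ g13Rep i ⬝ᵥ g13Rep j = 0 := by
  rw [G13, SimpleGraph.fromRel_adj, dotProduct_comm (g13Vecs j), or_self,
    g13Vecs_dotProduct_eq_zero_iff]

instance : DecidableRel G13.Adj := fun _ _ => decidable_of_iff _ G13_adj_iff.symm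

theorem G13_not_colorable_three : ¬ G13.Colorable 3 := by
  rintro ⟨C⟩
  have hC {i j : Fin 13} (h : G13.Adj i j) : C i ≠ C j := C.valid h
  have h01 : C 0 ≠ C 1 := hC (by decide)
  have h02 : C 0 ≠ C 2 := hC (by decide)
  have h12 : C 1 ≠ C 2 := hC (by decide)
  have sees_three (x u v w : Fin 13) (hu : G13.Adj x u) (hv : G13.Adj x v) (hw : G13.Adj x w)
      (h0 : C u = C 0) (h1 : C v = C 1) (h2 : C w = C 2) : False :=
    Fin.three_pigeonhole h01 h02 h12 (h0 ▸ hC hu) (h1 ▸ hC hv) (h2 ▸ hC hw)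
  have pair34 := Fin.eq_and_eq_or_eq_and_eq_of_ne h01 h02 h12
    (hC (by decide : G13.Adj 3 2)) (hC (by decide : G13.Adj 4 2)) (hC (by decide))
  have pair56 := Fin.eq_and_eq_or_eq_and_eq_of_ne h02 h01 h12.symm
    (hC (by decide : G13.Adj 5 1)) (hC (by decide : G13.Adj 6 1)) (hC (by decide))
  have pair78 := Fin.eq_and_eq_or_eq_and_eq_of_ne h12 h01.symm h02.symm
    (hC (by decide : G13.Adj 7 0)) (hC (by decide : G13.Adj 8 0)) (hC (by decide))
  rcases pair34 with ⟨h3, h4⟩ | ⟨h3, h4⟩ <;> rcases pair56 with ⟨h5, h6⟩ | ⟨h5, h6⟩ <;>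
    rcases pair78 with ⟨h7, h8⟩ | ⟨h7, h8⟩
  · exact sees_three 11 3 7 6 (by decide) (by decide) (by decide) h3 h7 h6
  · exact sees_three 10 5 4 7 (by decide) (by decide) (by decide) h5 h4 h7
  · exact sees_three 9 6 4 8 (by decide) (by decide) (by decide) h6 h4 h8
  · exact sees_three 12 3 8 5 (by decide) (by decide) (by decide) h3 h8 h5
  · exact sees_three 12 5 3 8 (by decide) (by decide) (by decide) h5 h3 h8
  · exact sees_three 9 4 8 6 (by decide) (by decide) (by decide) h4 h8 h6
  · exact sees_three 10 4 7 5 (by decide) (by decide) (by decide) h4 h7 h5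
  · exact sees_three 11 6 3 7 (by decide) (by decide) (by decide) h6 h3 h7

theorem G13_four_le_chromaticNumber : 4 ≤ G13.chromaticNumber :=
  Order.add_one_le_of_lt <| not_le.1 fun h =>
    G13_not_colorable_three (SimpleGraph.chromaticNumber_le_iff_colorable.1 h)

lemma g13Rep_leadingOne (i : Fin 13) : LeadingOne (g13Rep i) := by
  unfold LeadingOne; revert i; decide

lemma g13Rep_injective : Function.Injective g13Rep := by decide

lemma g13Rep_mem_ERVerts {p : ℕ} [Fact p.Prime] (hp : 3 ≤ p) (i : Fin 13) :
    g13Rep i ∈ ERVerts p := by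
  refine mem_ERVerts_of_leadingOne p (g13Rep_leadingOne i) fun k => ?_
  have : |g13Rep i k| ≤ 1 := by revert i k; decide
  omega

def g13EmbeddingERGraph {p : ℕ} [Fact p.Prime] (hp : 3 ≤ p) : G13 ↪g ERGraph p where
  toFun i := ⟨g13Rep i, g13Rep_mem_ERVerts hp i⟩
  inj' _ _ h := g13Rep_injective (congrArg Subtype.val h)
  map_rel_iff' {i j} := by
    change (ERGraph p).Adj ⟨g13Rep i, _⟩ ⟨g13Rep j, _⟩ ↔ G13.Adj i j
    rw [ERGraph_adj_iff, G13_adj_iff, Ne, Subtype.mk.injEq, g13Rep_injective.eq_iff]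

theorem ERGraph_contains_G13_general (p : ℕ) [Fact p.Prime] (hp3 : 3 ≤ p) :
    Nonempty (G13 ↪g ERGraph p) ∧ 4 ≤ (ERGraph p).chromaticNumber :=
  ⟨⟨g13EmbeddingERGraph hp3⟩, G13_four_le_chromaticNumber.trans
    (SimpleGraph.chromaticNumber_mono_of_hom (g13EmbeddingERGraph hp3).toHom)⟩

/-- For every odd prime `p`, `ER'(p)` contains an (induced) copy of `G₁₃`, and
hence has chromatic number at least 4. -/
theorem ERGraph_contains_G13 (p : ℕ) [Fact p.Prime] (hp : Odd p) (hp3 : 3 ≤ p) :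
    Nonempty (G13 ↪g ERGraph p) ∧ 4 ≤ (ERGraph p).chromaticNumber :=
  ERGraph_contains_G13_general p hp3
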